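/- Take r = 3/4 (so x = √7/8, y = 3/8) and let Λ be the subgroup of ℤ² generated by (4, −1) and (2, 2), which has index 10 in ℤ². Then the separation of the induced 10-colouring of the tiles T(i, j) equals √11 / 2 (i.e. separation squared equals 11/4), and this value is attained. -/

import Mathlib

noncomputable section

/-- The Euclidean plane ℝ². -/
abbrev Plane := EuclideanSpace ℝ (Fin 2)

/-- The point (a, b) of the Euclidean plane. -/
def pt (a b : ℝ) : Plane := WithLp.toLp 2 ![a, b]

/-- The semi-regular hexagon K(r): with y = r/2 and x = √(1 − r²)/2, the closed convex
hull of the six points (0, 1/2), (x, y), (x, −y), (0, −1/2), (−x, −y), (−x, y). -/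
def hexK (r : ℝ) : Set Plane :=
  convexHull ℝ
    {pt 0 (1 / 2), pt (Real.sqrt (1 - r ^ 2) / 2) (r / 2),
      pt (Real.sqrt (1 - r ^ 2) / 2) (-(r / 2)), pt 0 (-(1 / 2)),
      pt (-(Real.sqrt (1 - r ^ 2) / 2)) (-(r / 2)),
      pt (-(Real.sqrt (1 - r ^ 2) / 2)) (r / 2)}

/-- The center c(i, j) = ((2i + j)·x, j·(y + 1/2)) of the tile with index (i, j). -/
def center (r : ℝ) (i j : ℤ) : Plane :=
  pt ((2 * (i : ℝ) + (j : ℝ)) * (Real.sqrt (1 - r ^ 2) / 2)) ((j : ℝ) * (r / 2 + 1 / 2))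

/-- The tile T(i, j) = c(i, j) + K(r). -/
def tile (r : ℝ) (i j : ℤ) : Set Plane :=
  (fun p => center r i j + p) '' hexK r

/-- The set of distances realized by points in two distinct same-coloured tiles,
for the colouring of the tiles T(i, j) by the cosets of a subgroup Λ ≤ ℤ²:
tiles T(i, j) and T(i', j') get the same colour iff (i − i', j − j') ∈ Λ.
The separation of the colouring is the infimum of this set. -/
def sameColourDists (r : ℝ) (Λ : AddSubgroup (ℤ × ℤ)) : Set ℝ :=
  {d : ℝ | ∃ (i j i' j' : ℤ) (p q : Plane),
    (i, j) ≠ (i', j') ∧ (i - i', j - j') ∈ Λ ∧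
    p ∈ tile r i j ∧ q ∈ tile r i' j' ∧ d = dist p q}

end

/-!
Two tiles `T(i, j)` and `T(i', j')` are at distance `‖c(i - i', j - j') + k₁ - k₂‖` with
`k₁, k₂ ∈ K`. Since `K` lies in the disc of radius `1 / 2`, a lattice vector whose centre has
norm at least `1 + √11 / 2` keeps its tiles `√11 / 2` apart. The lattice `Λ` is the kernel of
`(a, b) ↦ a + 4 b mod 10`, and its only shorter nonzero vectors are `±(4, -1)`, `±(2, 2)` and
`±(2, -3)`; for each of these, projecting onto a suitable direction `n` and bounding `⟪n, k⟫`
on `K` by its values at the vertices separates the two hexagons by exactly `√11 / 2`. The value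
is attained between the vertex `(-x, y)` of `T(4, -1)` and the vertex `(x, -y)` of `T(0, 0)`.
-/

open scoped RealInnerProductSpace

section InnerProductSpace

variable {E : Type*} [NormedAddCommGroup E] [InnerProductSpace ℝ E]

lemma abs_inner_le_of_mem_convexHull {s : Set E} {n k : E} {M : ℝ}
    (hs : ∀ v ∈ s, |⟪n, v⟫| ≤ M) (hk : k ∈ convexHull ℝ s) : |⟪n, k⟫| ≤ M := by
  have hconv : Convex ℝ {z : E | ⟪n, z⟫ ∈ Set.Icc (-M) M} :=
    (convex_Icc (-M) M).linear_preimage (innerₛₗ ℝ n)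
  exact abs_le.mpr (convexHull_min (fun v hv => abs_le.mp (hs v hv)) hconv hk)

lemma le_norm_add_sub_of_abs_inner_le {n c k₁ k₂ : E} {M d : ℝ} (hn : n ≠ 0)
    (h₁ : |⟪n, k₁⟫| ≤ M) (h₂ : |⟪n, k₂⟫| ≤ M) (hc : ‖n‖ * d + 2 * M ≤ ⟪n, c⟫) :
    d ≤ ‖c + k₁ - k₂‖ := by
  have hcs : ⟪n, c + k₁ - k₂⟫ ≤ ‖n‖ * ‖c + k₁ - k₂‖ := real_inner_le_norm _ _
  rw [inner_sub_right, inner_add_right] at hcs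
  refine le_of_mul_le_mul_left ?_ (norm_pos_iff.mpr hn)
  linarith [abs_le.mp h₁, abs_le.mp h₂]

end InnerProductSpace

lemma pt_add (a b c d : ℝ) : pt a b + pt c d = pt (a + c) (b + d) := by
  ext i; fin_cases i <;> rfl

lemma pt_sub (a b c d : ℝ) : pt a b - pt c d = pt (a - c) (b - d) := by
  ext i; fin_cases i <;> rfl

lemma neg_pt (a b : ℝ) : -pt a b = pt (-a) (-b) := by
  ext i; fin_cases i <;> rfl

lemma inner_pt (a b c d : ℝ) : ⟪pt a b, pt c d⟫ = a * c + b * d := by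
  simp [pt, PiLp.inner_apply, Fin.sum_univ_two]; ring

lemma norm_pt (a b : ℝ) : ‖pt a b‖ = √(a ^ 2 + b ^ 2) := by
  simp [EuclideanSpace.norm_eq, pt, Fin.sum_univ_two, sq_abs]

lemma norm_le_half_of_mem_hexK {r : ℝ} (hr : r ^ 2 ≤ 1) {k : Plane} (hk : k ∈ hexK r) :
    ‖k‖ ≤ 1 / 2 := by
  have hx : √(1 - r ^ 2) ^ 2 = 1 - r ^ 2 := Real.sq_sqrt (by linarith)
  have hvert : ∀ a b : ℝ, a ^ 2 + b ^ 2 = 1 / 4 →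
      pt a b ∈ Metric.closedBall (0 : Plane) (1 / 2) := by
    intro a b h
    rw [mem_closedBall_zero_iff, norm_pt, h, show (1 / 4 : ℝ) = (1 / 2) ^ 2 by norm_num,
      Real.sqrt_sq (by norm_num)]
  refine mem_closedBall_zero_iff.mp (convexHull_min ?_ (convex_closedBall _ _) hk)
  simp only [Set.insert_subset_iff, Set.singleton_subset_iff]
  refine ⟨?_, ?_, ?_, ?_, ?_, ?_⟩ <;> apply hvert <;> first | linear_combination hx / 4 | norm_num

lemma abs_inner_le_of_mem_hexK {r u w M : ℝ} (h₁ : |w / 2| ≤ M)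
    (h₂ : |u * (√(1 - r ^ 2) / 2) + w * (r / 2)| ≤ M)
    (h₃ : |u * (√(1 - r ^ 2) / 2) - w * (r / 2)| ≤ M) {k : Plane} (hk : k ∈ hexK r) :
    |⟪pt u w, k⟫| ≤ M := by
  rw [abs_le] at h₁ h₂ h₃
  refine abs_inner_le_of_mem_convexHull ?_ hk
  simp only [Set.mem_insert_iff, Set.mem_singleton_iff]
  rintro v (rfl | rfl | rfl | rfl | rfl | rfl) <;> rw [inner_pt, abs_le] <;>
    constructor <;> linarith [h₁.1, h₁.2, h₂.1, h₂.2, h₃.1, h₃.2]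

lemma center_sub_center (r : ℝ) (i j i' j' : ℤ) :
    center r i j - center r i' j' = center r (i - i') (j - j') := by
  simp only [center, pt_sub]
  congr 1 <;> push_cast <;> ring

lemma center_neg (r : ℝ) (a b : ℤ) : center r (-a) (-b) = -center r a b := by
  simp only [center, neg_pt]
  congr 1 <;> push_cast <;> ring

lemma exists_dist_eq_of_mem_tile {r : ℝ} {i j i' j' : ℤ} {p q : Plane}
    (hp : p ∈ tile r i j) (hq : q ∈ tile r i' j') :
    ∃ k₁ ∈ hexK r, ∃ k₂ ∈ hexK r, dist p q = ‖center r (i - i') (j - j') + k₁ - k₂‖ := by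
  obtain ⟨k₁, hk₁, rfl⟩ := hp
  obtain ⟨k₂, hk₂, rfl⟩ := hq
  refine ⟨k₁, hk₁, k₂, hk₂, ?_⟩
  show dist (center r i j + k₁) (center r i' j' + k₂) = _
  rw [dist_eq_norm, ← center_sub_center]
  congr 1
  abel

def colourHom : ℤ × ℤ →+ ZMod 10 where
  toFun p := p.1 + 4 * p.2
  map_zero' := by simp
  map_add' p q := by simp only [Prod.fst_add, Prod.snd_add]; push_cast; ring

lemma mem_ker_colourHom {a b : ℤ} : (a, b) ∈ colourHom.ker ↔ (10 : ℤ) ∣ a + 4 * b := by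
  simpa [colourHom] using ZMod.intCast_zmod_eq_zero_iff_dvd (a + 4 * b) 10

lemma closure_eq_ker_colourHom :
    AddSubgroup.closure {((4 : ℤ), (-1 : ℤ)), ((2 : ℤ), (2 : ℤ))} = colourHom.ker := by
  apply le_antisymm
  · rw [AddSubgroup.closure_le]
    rintro p (rfl | rfl) <;> simp only [SetLike.mem_coe, mem_ker_colourHom] <;> norm_num
  · rintro ⟨a, b⟩ hab
    rw [mem_ker_colourHom] at hab
    have hcomb : ((a, b) : ℤ × ℤ) =
        ((a - b) / 5) • ((4 : ℤ), (-1 : ℤ)) + ((a + 4 * b) / 10) • ((2 : ℤ), (2 : ℤ)) := by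
      simp only [Prod.smul_mk, Prod.mk_add_mk, smul_eq_mul, Prod.mk.injEq]
      omega
    rw [hcomb]
    exact add_mem (zsmul_mem (AddSubgroup.subset_closure (by simp)) _)
      (zsmul_mem (AddSubgroup.subset_closure (by simp)) _)

lemma index_closure :
    (AddSubgroup.closure {((4 : ℤ), (-1 : ℤ)), ((2 : ℤ), (2 : ℤ))}).index = 10 := by
  have hsurj : Function.Surjective colourHom := fun z =>
    ⟨(z.val, 0), by simp [colourHom]⟩
  rw [closure_eq_ker_colourHom, AddSubgroup.index,
    Nat.card_congr (QuotientAddGroup.quotientKerEquivOfSurjective _ hsurj).toEquiv, Nat.card_zmod]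

lemma half_sqrt_one_sub_three_fourths_sq : √(1 - (3 / 4 : ℝ) ^ 2) / 2 = √7 / 8 := by
  rw [show (1 - (3 / 4) ^ 2 : ℝ) = 7 / 4 ^ 2 by norm_num, Real.sqrt_div' _ (by positivity),
    Real.sqrt_sq (by norm_num)]
  ring

lemma center_three_fourths (i j : ℤ) :
    center (3 / 4) i j = pt ((2 * i + j) * (√7 / 8)) (j * (7 / 8)) := by
  rw [center, half_sqrt_one_sub_three_fourths_sq]
  norm_num

/-- Up to sign, the nonzero vectors of `Λ` whose centres have norm below `1 + √11 / 2`. -/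
def shortVectors : Set (ℤ × ℤ) := {(4, -1), (2, 2), (2, -3)}

-- `64 ‖center (3 / 4) a b‖ ^ 2 = 7 (2a + b) ^ 2 + 49 b ^ 2`, and `453 / 64 > (1 + √11 / 2) ^ 2`.
lemma mem_shortVectors_or {a b : ℤ} (h10 : (10 : ℤ) ∣ a + 4 * b) (h0 : (a, b) ≠ 0) :
    (a, b) ∈ shortVectors ∨ (-a, -b) ∈ shortVectors ∨ 453 ≤ 7 * (2 * a + b) ^ 2 + 49 * b ^ 2 := by
  simp only [shortVectors, Set.mem_insert_iff, Set.mem_singleton_iff, Prod.mk.injEq]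
  rw [Ne, Prod.mk_eq_zero] at h0
  rcases le_or_gt 4 |b| with hb | hb
  · right; right; nlinarith [sq_abs b, sq_nonneg (2 * a + b)]
  rcases le_or_gt 13 |2 * a + b| with ht | ht
  · right; right; nlinarith [sq_abs (2 * a + b), sq_nonneg b]
  rw [abs_lt] at hb ht
  rw [← or_assoc]
  left
  obtain ⟨hb₁, hb₂⟩ := hb
  interval_cases b <;> omega

lemma one_add_sqrt_eleven_div_two_le_norm_center {a b : ℤ}
    (h : 453 ≤ 7 * (2 * a + b) ^ 2 + 49 * b ^ 2) : 1 + √11 / 2 ≤ ‖center (3 / 4) a b‖ := by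
  have h7 : √7 ^ 2 = 7 := Real.sq_sqrt (by norm_num)
  have h11 : √11 ^ 2 = 11 := Real.sq_sqrt (by norm_num)
  have hR : (453 : ℝ) ≤ 7 * (2 * a + b) ^ 2 + 49 * b ^ 2 := by exact_mod_cast h
  have hs : √11 < 213 / 64 := by rw [Real.sqrt_lt' (by norm_num)]; norm_num
  rw [center_three_fourths, norm_pt, Real.le_sqrt (by positivity) (by positivity), mul_pow,
    div_pow, h7]
  nlinarith

lemma sqrt_eleven_div_two_le_of_mem_shortVectors {a b : ℤ} (h : (a, b) ∈ shortVectors)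
    {k₁ k₂ : Plane} (hk₁ : k₁ ∈ hexK (3 / 4)) (hk₂ : k₂ ∈ hexK (3 / 4)) :
    √11 / 2 ≤ ‖center (3 / 4) a b + k₁ - k₂‖ := by
  have h7 : √7 ^ 2 = 7 := Real.sq_sqrt (by norm_num)
  have h11 : √11 ^ 2 = 11 := Real.sq_sqrt (by norm_num)
  have hsep : ∀ u w M N : ℝ, 0 < N → u ^ 2 + w ^ 2 = N ^ 2 → |w / 2| ≤ M →
      |u * (√7 / 8) + w * (3 / 8)| ≤ M → |u * (√7 / 8) - w * (3 / 8)| ≤ M →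
      N * (√11 / 2) + 2 * M ≤ ⟪pt u w, center (3 / 4) a b⟫ →
      √11 / 2 ≤ ‖center (3 / 4) a b + k₁ - k₂‖ := by
    intro u w M N hN hnorm h₁ h₂ h₃ hc
    rw [← Real.sqrt_sq hN.le, ← hnorm, ← norm_pt] at hc hN
    have hbound : ∀ k ∈ hexK (3 / 4), |⟪pt u w, k⟫| ≤ M := fun k hk =>
      abs_inner_le_of_mem_hexK h₁ (by rw [half_sqrt_one_sub_three_fourths_sq]; norm_num [h₂])
        (by rw [half_sqrt_one_sub_three_fourths_sq]; norm_num [h₃]) hk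
    exact le_norm_add_sub_of_abs_inner_le (norm_pos_iff.mp hN) (hbound k₁ hk₁) (hbound k₂ hk₂) hc
  simp only [shortVectors, Set.mem_insert_iff, Set.mem_singleton_iff, Prod.mk.injEq] at h
  -- `pt u w` points along a closest pair of points of the two tiles and `M` is the support
  -- function of the hexagon in that direction, so every estimate below is an equality.
  rcases h with ⟨rfl, rfl⟩ | ⟨rfl, rfl⟩ | ⟨rfl, rfl⟩ <;>
    [apply hsep (5 * √7) (-1) (19 / 4) (4 * √11); apply hsep √7 2 (13 / 8) √11;
      apply hsep √7 (-13) (13 / 2) (4 * √11)]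
  all_goals first
    | positivity
    | (rw [abs_le]; constructor <;> linarith)
    | (rw [center_three_fourths, inner_pt]; push_cast; linarith)
    | linarith

lemma sqrt_eleven_div_two_le_norm_center_add_sub {a b : ℤ} (h0 : (a, b) ≠ 0)
    (hΛ : (a, b) ∈ AddSubgroup.closure {((4 : ℤ), (-1 : ℤ)), ((2 : ℤ), (2 : ℤ))})
    {k₁ k₂ : Plane} (hk₁ : k₁ ∈ hexK (3 / 4)) (hk₂ : k₂ ∈ hexK (3 / 4)) :
    √11 / 2 ≤ ‖center (3 / 4) a b + k₁ - k₂‖ := by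
  rw [closure_eq_ker_colourHom, mem_ker_colourHom] at hΛ
  rcases mem_shortVectors_or hΛ h0 with hshort | hshort | hfar
  · exact sqrt_eleven_div_two_le_of_mem_shortVectors hshort hk₁ hk₂
  · calc √11 / 2 ≤ ‖center (3 / 4) (-a) (-b) + k₂ - k₁‖ :=
          sqrt_eleven_div_two_le_of_mem_shortVectors hshort hk₂ hk₁
      _ = ‖center (3 / 4) a b + k₁ - k₂‖ := by
          rw [center_neg, ← norm_neg]
          congr 1
          abel
  · have hc := one_add_sqrt_eleven_div_two_le_norm_center hfar
    have hr : (3 / 4 : ℝ) ^ 2 ≤ 1 := by norm_num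
    linarith [norm_le_add_norm_add (center (3 / 4) a b) k₁,
      norm_sub_norm_le (center (3 / 4) a b + k₁) k₂,
      norm_le_half_of_mem_hexK hr hk₁, norm_le_half_of_mem_hexK hr hk₂]

lemma sqrt_eleven_div_two_mem_sameColourDists :
    √11 / 2 ∈ sameColourDists (3 / 4)
      (AddSubgroup.closure {((4 : ℤ), (-1 : ℤ)), ((2 : ℤ), (2 : ℤ))}) := by
  have hx := half_sqrt_one_sub_three_fourths_sq
  have hv : ∀ v ∈ ({pt (-(√7 / 8)) (3 / 8), pt (√7 / 8) (-(3 / 8))} : Set Plane),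
      v ∈ hexK (3 / 4) := by
    intro v hv
    refine subset_convexHull ℝ _ ?_
    rw [hx]
    simp only [Set.mem_insert_iff, Set.mem_singleton_iff] at hv ⊢
    rcases hv with rfl | rfl <;> norm_num
  refine ⟨4, -1, 0, 0, center (3 / 4) 4 (-1) + pt (-(√7 / 8)) (3 / 8),
    center (3 / 4) 0 0 + pt (√7 / 8) (-(3 / 8)), by decide,
    AddSubgroup.subset_closure (by simp), ⟨_, hv _ (by simp), rfl⟩, ⟨_, hv _ (by simp), rfl⟩, ?_⟩
  have h7 : √7 ^ 2 = 7 := Real.sq_sqrt (by norm_num)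
  have h11 : √11 ^ 2 = 11 := Real.sq_sqrt (by norm_num)
  show _ = dist (center (3 / 4) 4 (-1) + _) (center (3 / 4) 0 0 + _)
  rw [dist_eq_norm, center_three_fourths, center_three_fourths, pt_add, pt_add, pt_sub, norm_pt,
    eq_comm, Real.sqrt_eq_iff_mul_self_eq_of_pos (by positivity)]
  push_cast
  linear_combination h11 / 4 - 25 * h7 / 64

/-- with r = 3/4 and Λ = ⟨(4, -1), (2, 2)⟩ ≤ ℤ² of index 10,
the separation of the induced 10-colouring of the tiles T(i, j) equals the stated
value, and this value is attained. -/
theorem statement10 :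
    (AddSubgroup.closure {(((4) : ℤ), ((-1) : ℤ)), (((2) : ℤ), ((2) : ℤ))}).index = 10 ∧
    IsLeast
      (sameColourDists (3 / 4)
        (AddSubgroup.closure {(((4) : ℤ), ((-1) : ℤ)), (((2) : ℤ), ((2) : ℤ))}))
      (Real.sqrt 11 / 2) := by
  refine ⟨index_closure, sqrt_eleven_div_two_mem_sameColourDists, ?_⟩
  rintro d ⟨i, j, i', j', p, q, hne, hΛ, hp, hq, rfl⟩
  obtain ⟨k₁, hk₁, k₂, hk₂, hpq⟩ := exists_dist_eq_of_mem_tile hp hq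
  have h0 : (i - i', j - j') ≠ 0 := by
    simpa only [Prod.mk_sub_mk] using sub_ne_zero.mpr hne
  rw [hpq]
  exact sqrt_eleven_div_two_le_norm_center_add_sub h0 hΛ hk₁ hk₂
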